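/- Let G be a simple graph of order n ≥ 1 and size m, and let Ḡ denote its complement. Then M2(Ḡ) = n(n-1)³/2 - 3m(n-1)² + 2m² + (n - 3/2)·M1(G) - M2(G). -/

import Mathlib

/-- Degree of a vertex (classical, so it works for any graph on a finite vertex type). -/
noncomputable def gdeg {V : Type*} [Fintype V] (G : SimpleGraph V) (v : V) : ℕ := by
  classical exact G.degree v

/-- First Zagreb index: sum of squares of the vertex degrees. -/
noncomputable def zagrebM1 {V : Type*} [Fintype V] (G : SimpleGraph V) : ℕ :=
  ∑ v, gdeg G v ^ 2

/-- Second Zagreb index: sum of d(u)·d(v) over the edges uv. -/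
noncomputable def zagrebM2 {V : Type*} [Fintype V] (G : SimpleGraph V) : ℕ := by
  classical exact
    ∑ e ∈ G.edgeFinset,
      Sym2.lift ⟨fun u v => gdeg G u * gdeg G v, fun u v => by simp [Nat.mul_comm]⟩ e

/-- The size (number of edges) of a graph. -/
noncomputable def gsize {V : Type*} [Fintype V] (G : SimpleGraph V) : ℕ := by
  classical exact G.edgeFinset.card

/-- A graph is `r`-regular if every vertex has degree `r`. -/
def gregOfDeg {V : Type*} [Fintype V] (G : SimpleGraph V) (r : ℕ) : Prop :=
  ∀ v, gdeg G v = r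

/-- A graph is regular if all its vertices have the same degree. -/
def gregular {V : Type*} [Fintype V] (G : SimpleGraph V) : Prop :=
  ∃ r, gregOfDeg G r

/-!
Write `d v` for the degree of `v` and `T v = ∑_{w ~ v} d w`, so that `2 M₂ = ∑ d T` and
`∑ T = ∑ d² = M₁`. The `Gᶜ`-neighbours of `v` are all vertices except `v` and its `G`-neighbours;
hence in `Gᶜ` the degree of `v` is `n - 1 - d v` and its neighbour degree sum is
`(n - 1)² - 2m - (n - 2) d v + T v`. Expanding
`2 M₂(Gᶜ) = ∑ (n - 1 - d) ((n - 1)² - 2m - (n - 2) d + T)` leaves only `∑ d = 2m`, `M₁` and `M₂`.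
-/

open Finset

namespace SimpleGraph

variable {V : Type*} [Fintype V] (G : SimpleGraph V) [DecidableRel G.Adj]

theorem sum_dart_eq_sum_sum_neighborFinset {M : Type*} [AddCommMonoid M] (f : V → V → M) :
    ∑ d : G.Dart, f d.fst d.snd = ∑ v, ∑ w ∈ G.neighborFinset v, f v w := by
  rw [sum_sigma']
  exact sum_bij' (fun d _ => ⟨d.fst, d.snd⟩) (fun p hp => ⟨(p.1, p.2), by simpa using hp⟩)
    (by simp) (by simp) (by simp) (by simp) (by simp)

theorem sum_dart_edge_eq_two_nsmul {M : Type*} [AddCommMonoid M] (F : Sym2 V → M) :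
    ∑ d : G.Dart, F d.edge = 2 • ∑ e ∈ G.edgeFinset, F e := by
  classical
  rw [← sum_fiberwise_of_maps_to' (t := G.edgeFinset) (fun d _ => by simp), smul_sum]
  refine sum_congr rfl fun e he => ?_
  rw [sum_const, G.dart_edge_fiber_card e (mem_edgeFinset.1 he)]

theorem sum_sum_neighborFinset_eq_two_nsmul_sum_edgeFinset {M : Type*} [AddCommMonoid M]
    (f : V → V → M) (hf : ∀ v w, f v w = f w v) :
    ∑ v, ∑ w ∈ G.neighborFinset v, f v w = 2 • ∑ e ∈ G.edgeFinset, Sym2.lift ⟨f, hf⟩ e := by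
  rw [← sum_dart_eq_sum_sum_neighborFinset, ← sum_dart_edge_eq_two_nsmul]
  rfl

theorem sum_sum_neighborFinset_eq_sum_degree_nsmul {M : Type*} [AddCommMonoid M] (g : V → M) :
    ∑ v, ∑ w ∈ G.neighborFinset v, g w = ∑ v, G.degree v • g v := by
  rw [sum_comm' (t' := univ) (s' := fun w => G.neighborFinset w) fun v w => by simp [adj_comm]]
  simp only [sum_const, card_neighborFinset_eq_degree]

theorem sum_neighborFinset_compl {M : Type*} [AddCommGroup M] [DecidableEq V] (g : V → M)
    (v : V) : ∑ w ∈ Gᶜ.neighborFinset v, g w = ∑ w, g w - g v - ∑ w ∈ G.neighborFinset v, g w := by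
  rw [neighborFinset_compl, sum_sdiff_eq_sub (by simp), sum_singleton,
    ← sum_compl_add_sum (G.neighborFinset v)]
  abel

theorem cast_degree_compl {R : Type*} [AddGroupWithOne R] [DecidableEq V] (v : V) :
    (Gᶜ.degree v : R) = Fintype.card V - 1 - G.degree v := by
  rw [degree_compl, Nat.cast_sub (Nat.le_sub_one_of_lt (G.degree_lt_card_verts v)),
    Nat.cast_sub (Fintype.card_pos_iff.2 ⟨v⟩), Nat.cast_one]

def neighborDegreeSum (v : V) : ℕ := ∑ w ∈ G.neighborFinset v, G.degree w

theorem sum_neighborDegreeSum : ∑ v, G.neighborDegreeSum v = ∑ v, G.degree v ^ 2 := by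
  simp only [neighborDegreeSum, sum_sum_neighborFinset_eq_sum_degree_nsmul, smul_eq_mul, sq]

theorem cast_neighborDegreeSum_compl {R : Type*} [CommRing R] [DecidableEq V] (v : V) :
    (Gᶜ.neighborDegreeSum v : R) = (Fintype.card V - 1) ^ 2 - 2 * #G.edgeFinset
      - (Fintype.card V - 2) * G.degree v + G.neighborDegreeSum v := by
  have sum_compl_degree (s : Finset V) : ∑ w ∈ s, ((Fintype.card V : R) - 1 - G.degree w)
      = #s * (Fintype.card V - 1) - ∑ w ∈ s, (G.degree w : R) := by
    simp [sum_sub_distrib, mul_sub]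
  simp only [neighborDegreeSum, Nat.cast_sum, cast_degree_compl, G.sum_neighborFinset_compl,
    sum_compl_degree, card_univ, card_neighborFinset_eq_degree]
  rw [← Nat.cast_sum, sum_degrees_eq_twice_card_edges]
  push_cast
  ring

end SimpleGraph

section Zagreb

variable {V : Type*} [Fintype V] (G : SimpleGraph V) [DecidableRel G.Adj]

theorem gdeg_eq_degree (v : V) : gdeg G v = G.degree v := by
  unfold gdeg
  congr!

theorem gsize_eq_card_edgeFinset : gsize G = #G.edgeFinset := by
  unfold gsize
  congr!

theorem zagrebM1_eq_sum_degree_sq : zagrebM1 G = ∑ v, G.degree v ^ 2 := by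
  simp only [zagrebM1, gdeg_eq_degree]

theorem two_mul_zagrebM2 : 2 * zagrebM2 G = ∑ v, G.degree v * G.neighborDegreeSum v := by
  simp_rw [SimpleGraph.neighborDegreeSum, mul_sum]
  rw [G.sum_sum_neighborFinset_eq_two_nsmul_sum_edgeFinset _ fun v w => Nat.mul_comm _ _,
    smul_eq_mul, zagrebM2]
  congr! <;> exact gdeg_eq_degree G _

theorem two_mul_zagrebM2_compl {R : Type*} [CommRing R] [DecidableEq V] :
    2 * (zagrebM2 Gᶜ : R) = ∑ v, (Fintype.card V - 1 - G.degree v : R) *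
      ((Fintype.card V - 1) ^ 2 - 2 * #G.edgeFinset - (Fintype.card V - 2) * G.degree v
        + G.neighborDegreeSum v) := by
  have h : 2 * (zagrebM2 Gᶜ : R) = ∑ v, (Gᶜ.degree v : R) * Gᶜ.neighborDegreeSum v := by
    simpa using congrArg (Nat.cast (R := R)) (two_mul_zagrebM2 Gᶜ)
  simp only [h, G.cast_degree_compl, G.cast_neighborDegreeSum_compl]

end Zagreb

theorem stmt_3_general {V : Type*} [Fintype V] (G : SimpleGraph V) (n m : ℕ)
    (hn : n = Fintype.card V) (hm : m = gsize G) :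
    (zagrebM2 Gᶜ : ℚ) =
      (n : ℚ) * (n - 1) ^ 3 / 2 - 3 * m * (n - 1) ^ 2 + 2 * m ^ 2 +
        ((n : ℚ) - 3 / 2) * zagrebM1 G - zagrebM2 G := by
  classical
  subst hn hm
  have hdeg : ∑ v, (G.degree v : ℚ) = 2 * #G.edgeFinset := by
    exact_mod_cast G.sum_degrees_eq_twice_card_edges
  have hM1 : ∑ v, (G.degree v : ℚ) ^ 2 = zagrebM1 G := by
    exact_mod_cast (zagrebM1_eq_sum_degree_sq G).symm
  have hT : ∑ v, (G.neighborDegreeSum v : ℚ) = zagrebM1 G := by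
    exact_mod_cast G.sum_neighborDegreeSum.trans (zagrebM1_eq_sum_degree_sq G).symm
  have hM2 : ∑ v, (G.degree v : ℚ) * G.neighborDegreeSum v = 2 * zagrebM2 G := by
    exact_mod_cast (two_mul_zagrebM2 G).symm
  have hM2c := two_mul_zagrebM2_compl (R := ℚ) G
  set n : ℚ := (Fintype.card V : ℚ)
  set m : ℚ := (#G.edgeFinset : ℚ)
  have hexpand (d T : ℚ) : (n - 1 - d) * ((n - 1) ^ 2 - 2 * m - (n - 2) * d + T)
      = ((n - 1) ^ 3 - 2 * m * (n - 1)) + (2 * m - 2 * (n - 1) ^ 2 + (n - 1)) * d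
        + (n - 2) * d ^ 2 + (n - 1) * T - d * T := by
    ring
  simp only [hexpand, sum_add_distrib, sum_sub_distrib, ← mul_sum, sum_const, card_univ,
    nsmul_eq_mul, hdeg, hM1, hT, hM2] at hM2c
  rw [gsize_eq_card_edgeFinset]
  linear_combination hM2c / 2

/-- `M2(Ḡ) = n(n-1)³/2 - 3m(n-1)² + 2m² + (n - 3/2)·M1(G) - M2(G)`. -/
theorem stmt_3 {V : Type*} [Fintype V] (G : SimpleGraph V) (n m : ℕ)
    (hn : n = Fintype.card V) (hn1 : 1 ≤ n) (hm : m = gsize G) :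
    (zagrebM2 Gᶜ : ℚ) =
      (n : ℚ) * (n - 1) ^ 3 / 2 - 3 * m * (n - 1) ^ 2 + 2 * m ^ 2 +
        ((n : ℚ) - 3 / 2) * zagrebM1 G - zagrebM2 G :=
  stmt_3_general G n m hn hm
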